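/- arXiv:2008.00955 — 4 statements merged into one kernel-verified Lean document; each statement's English description precedes it below -/
import Mathlib

section
/- Let n ≥ 1 and let r ≥ 1 be a real number. For all vectors a, b ∈ ℝⁿ one has (|a|^{r-1}a − |b|^{r-1}b)·(a − b) ≥ (1/2)|a|^{r-1}|a − b|² + (1/2)|b|^{r-1}|a − b|², where · is the Euclidean inner product and |·| the Euclidean norm. -/
/-!
Expanding, `⟪α • a - β • b, a - b⟫` exceeds `(α + β) / 2 * ‖a - b‖ ^ 2` by exactly
`(α - β) * (‖a‖ ^ 2 - ‖b‖ ^ 2) / 2`, which is nonnegative as soon as the weights are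
`α = φ ‖a‖`, `β = φ ‖b‖` for a nondecreasing `φ`, such as `t ↦ t ^ (r - 1)` with `r ≥ 1`.
-/

open scoped RealInnerProductSpace

section InnerProductSpace

variable {E : Type*} [NormedAddCommGroup E] [InnerProductSpace ℝ E]

theorem inner_smul_sub_smul_sub_eq (α β : ℝ) (a b : E) :
    ⟪α • a - β • b, a - b⟫ =
      (α + β) / 2 * ‖a - b‖ ^ 2 + (α - β) * (‖a‖ ^ 2 - ‖b‖ ^ 2) / 2 := by
  simp only [norm_sub_sq_real, inner_sub_left, inner_sub_right, real_inner_smul_left,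
    real_inner_self_eq_norm_sq, real_inner_comm a b]
  ring

theorem MonotoneOn.mul_norm_sub_sq_add_le_inner {φ : ℝ → ℝ} (hφ : MonotoneOn φ (Set.Ici 0))
    (a b : E) :
    (1 / 2) * φ ‖a‖ * ‖a - b‖ ^ 2 + (1 / 2) * φ ‖b‖ * ‖a - b‖ ^ 2 ≤
      ⟪φ ‖a‖ • a - φ ‖b‖ • b, a - b⟫ := by
  have hmonovary : MonovaryOn φ (· ^ 2) (Set.Ici 0) := hφ.monovaryOn pow_left_monotoneOn
  have hcross : 0 ≤ (φ ‖a‖ - φ ‖b‖) * (‖a‖ ^ 2 - ‖b‖ ^ 2) :=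
    hmonovary.sub_mul_sub_nonneg (norm_nonneg b) (norm_nonneg a)
  rw [inner_smul_sub_smul_sub_eq]
  linarith

end InnerProductSpace

theorem forchheimer_pointwise_strong_monotone_general (n : ℕ) (r : ℝ) (hr : 1 ≤ r)
    (a b : EuclideanSpace ℝ (Fin n)) :
    (1 / 2) * ‖a‖ ^ (r - 1) * ‖a - b‖ ^ 2 + (1 / 2) * ‖b‖ ^ (r - 1) * ‖a - b‖ ^ 2 ≤
      ⟪(‖a‖ ^ (r - 1)) • a - (‖b‖ ^ (r - 1)) • b, a - b⟫ :=
  (Real.monotoneOn_rpow_Ici_of_exponent_nonneg (sub_nonneg.2 hr)).mul_norm_sub_sq_add_le_inner a b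

/-- Pointwise strong monotonicity of `a ↦ |a|^{r-1} a` on `ℝⁿ`:
`(|a|^{r-1}a − |b|^{r-1}b)·(a − b) ≥ ½|a|^{r-1}|a−b|² + ½|b|^{r-1}|a−b|²`. -/
theorem forchheimer_pointwise_strong_monotone (n : ℕ) (hn : 1 ≤ n) (r : ℝ) (hr : 1 ≤ r)
    (a b : EuclideanSpace ℝ (Fin n)) :
    (1 / 2) * ‖a‖ ^ (r - 1) * ‖a - b‖ ^ 2 + (1 / 2) * ‖b‖ ^ (r - 1) * ‖a - b‖ ^ 2 ≤
      ⟪(‖a‖ ^ (r - 1)) • a - (‖b‖ ^ (r - 1)) • b, a - b⟫ :=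
  forchheimer_pointwise_strong_monotone_general n r hr a b
end

section
/- Let (X, 𝒜, m) be a measure space, n ≥ 1, and let r ≥ 1 be a real number. Let u, v : X → ℝⁿ be measurable with ∫_X |u|^{r+1} dm < ∞ and ∫_X |v|^{r+1} dm < ∞. Then ∫_X (|u(x)|^{r-1}u(x) − |v(x)|^{r-1}v(x)) · (u(x) − v(x)) dm(x) ≥ 2^{1-r} ∫_X |u(x) − v(x)|^{r+1} dm(x), where · is the Euclidean inner product and |·| the Euclidean norm on ℝⁿ. -/
/-!
Pointwise, with `s = ‖a‖`, `t = ‖b‖` and `p = r - 1`, one has the identity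
`(s + t) ⟪s^p a - t^p b, a - b⟫ = (s^r + t^r) ‖a - b‖² + (s^p - t^p)(s - t)(s t + ⟪a, b⟫)`,
whose last term is nonnegative by monotonicity of `x ↦ x^p` and Cauchy–Schwarz.
Together with `‖a - b‖ ≤ s + t` and the power mean inequality `(s + t)^r ≤ 2^(r-1) (s^r + t^r)`
this gives the inequality pointwise after cancelling `s + t`. The integrand on the right is
dominated by `2 (‖u‖^(r+1) + ‖v‖^(r+1))`, so the pointwise inequality integrates.
-/

open MeasureTheory
open scoped RealInnerProductSpace

namespace Real

theorem rpow_mul_self {x p : ℝ} (hx : 0 ≤ x) (hp : 0 ≤ p) : x ^ p * x = x ^ (p + 1) :=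
  (rpow_add_one' hx (ne_of_gt (by linarith))).symm

theorem rpow_add_le_mul_rpow_add_rpow {x y p : ℝ} (hx : 0 ≤ x) (hy : 0 ≤ y) (hp : 1 ≤ p) :
    (x + y) ^ p ≤ 2 ^ (p - 1) * (x ^ p + y ^ p) := by
  lift x to NNReal using hx
  lift y to NNReal using hy
  exact_mod_cast NNReal.rpow_add_le_mul_rpow_add_rpow x y hp

theorem rpow_sub_rpow_mul_sub_nonneg {x y p : ℝ} (hx : 0 ≤ x) (hy : 0 ≤ y) (hp : 0 ≤ p) :
    0 ≤ (x ^ p - y ^ p) * (x - y) := by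
  rcases le_total x y with hxy | hyx
  · exact mul_nonneg_of_nonpos_of_nonpos (sub_nonpos.2 (rpow_le_rpow hx hxy hp)) (sub_nonpos.2 hxy)
  · exact mul_nonneg (sub_nonneg.2 (rpow_le_rpow hy hyx hp)) (sub_nonneg.2 hyx)

end Real

section InnerProductSpace

variable {E : Type*} [NormedAddCommGroup E] [InnerProductSpace ℝ E]

theorem norm_add_norm_mul_inner_rpow_smul_sub (p : ℝ) (a b : E) :
    (‖a‖ + ‖b‖) * ⟪‖a‖ ^ p • a - ‖b‖ ^ p • b, a - b⟫ =
      (‖a‖ ^ p * ‖a‖ + ‖b‖ ^ p * ‖b‖) * ‖a - b‖ ^ 2 +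
        (‖a‖ ^ p - ‖b‖ ^ p) * (‖a‖ - ‖b‖) * (‖a‖ * ‖b‖ + ⟪a, b⟫) := by
  simp only [norm_sub_sq_real, inner_sub_left, inner_sub_right, real_inner_smul_left,
    real_inner_self_eq_norm_sq, real_inner_comm b a]
  ring

theorem norm_rpow_smul_self (p : ℝ) (a : E) : ‖‖a‖ ^ p • a‖ = ‖a‖ ^ p * ‖a‖ := by
  rw [norm_smul, Real.norm_of_nonneg (by positivity)]

theorem two_rpow_one_sub_mul_norm_sub_rpow_le_inner {r : ℝ} (hr : 1 ≤ r) (a b : E) :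
    2 ^ (1 - r) * ‖a - b‖ ^ (r + 1) ≤ ⟪‖a‖ ^ (r - 1) • a - ‖b‖ ^ (r - 1) • b, a - b⟫ := by
  rcases (add_nonneg (norm_nonneg a) (norm_nonneg b)).eq_or_lt with hab | hab
  · obtain ⟨rfl, rfl⟩ : a = 0 ∧ b = 0 := by
      simpa using (add_eq_zero_iff_of_nonneg (norm_nonneg a) (norm_nonneg b)).1 hab.symm
    simp [Real.zero_rpow (by linarith : r + 1 ≠ 0)]
  have hpow : ∀ x : ℝ, 0 ≤ x → x ^ (r - 1) * x = x ^ r := fun x hx => by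
    rw [Real.rpow_mul_self hx (sub_nonneg.2 hr), sub_add_cancel]
  have hcs : 0 ≤ ‖a‖ * ‖b‖ + ⟪a, b⟫ := by
    linarith [abs_real_inner_le_norm a b, neg_abs_le ⟪a, b⟫]
  have hmono := Real.rpow_sub_rpow_mul_sub_nonneg (norm_nonneg a) (norm_nonneg b)
    (sub_nonneg.2 hr)
  refine le_of_mul_le_mul_left ?_ hab
  calc (‖a‖ + ‖b‖) * (2 ^ (1 - r) * ‖a - b‖ ^ (r + 1))
      = 2 ^ (1 - r) * (‖a - b‖ ^ (r - 1) * (‖a‖ + ‖b‖)) * ‖a - b‖ ^ 2 := by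
        rw [show r + 1 = r - 1 + (2 : ℕ) by push_cast; ring,
          Real.rpow_add' (norm_nonneg _) (by push_cast; linarith), Real.rpow_natCast]
        ring
    _ ≤ 2 ^ (1 - r) * ((‖a‖ + ‖b‖) ^ (r - 1) * (‖a‖ + ‖b‖)) * ‖a - b‖ ^ 2 := by
        gcongr
        exact norm_sub_le a b
    _ = 2 ^ (1 - r) * (‖a‖ + ‖b‖) ^ r * ‖a - b‖ ^ 2 := by rw [hpow _ hab.le]
    _ ≤ 2 ^ (1 - r) * (2 ^ (r - 1) * (‖a‖ ^ r + ‖b‖ ^ r)) * ‖a - b‖ ^ 2 := by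
        gcongr
        exact Real.rpow_add_le_mul_rpow_add_rpow (norm_nonneg a) (norm_nonneg b) hr
    _ = (‖a‖ ^ (r - 1) * ‖a‖ + ‖b‖ ^ (r - 1) * ‖b‖) * ‖a - b‖ ^ 2 := by
        rw [← mul_assoc, ← Real.rpow_add two_pos, hpow _ (norm_nonneg a),
          hpow _ (norm_nonneg b)]
        norm_num
    _ ≤ (‖a‖ + ‖b‖) * ⟪‖a‖ ^ (r - 1) • a - ‖b‖ ^ (r - 1) • b, a - b⟫ := by
        rw [norm_add_norm_mul_inner_rpow_smul_sub]
        exact le_add_of_nonneg_right (mul_nonneg hmono hcs)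

theorem norm_inner_rpow_smul_sub_le {r : ℝ} (hr : 1 ≤ r) (a b : E) :
    ‖⟪‖a‖ ^ (r - 1) • a - ‖b‖ ^ (r - 1) • b, a - b⟫‖ ≤ 2 * (‖a‖ ^ (r + 1) + ‖b‖ ^ (r + 1)) := by
  have hr0 : 0 ≤ r := by linarith
  have hmono := Real.rpow_sub_rpow_mul_sub_nonneg (norm_nonneg a) (norm_nonneg b) hr0
  calc ‖⟪‖a‖ ^ (r - 1) • a - ‖b‖ ^ (r - 1) • b, a - b⟫‖
      ≤ (‖‖a‖ ^ (r - 1) • a‖ + ‖‖b‖ ^ (r - 1) • b‖) * (‖a‖ + ‖b‖) :=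
        (norm_inner_le_norm _ _).trans (by gcongr <;> exact norm_sub_le _ _)
    _ = (‖a‖ ^ r + ‖b‖ ^ r) * (‖a‖ + ‖b‖) := by
        rw [norm_rpow_smul_self, norm_rpow_smul_self,
          Real.rpow_mul_self (norm_nonneg a) (sub_nonneg.2 hr),
          Real.rpow_mul_self (norm_nonneg b) (sub_nonneg.2 hr), sub_add_cancel]
    _ ≤ 2 * (‖a‖ ^ r * ‖a‖ + ‖b‖ ^ r * ‖b‖) := by linarith
    _ = 2 * (‖a‖ ^ (r + 1) + ‖b‖ ^ (r + 1)) := by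
        rw [Real.rpow_mul_self (norm_nonneg a) hr0, Real.rpow_mul_self (norm_nonneg b) hr0]

end InnerProductSpace

theorem forchheimer_integral_strong_monotone_general {X : Type*} [MeasurableSpace X] (m : Measure X)
    (n : ℕ) (r : ℝ) (hr : 1 ≤ r)
    (u v : X → EuclideanSpace ℝ (Fin n)) (hu : Measurable u) (hv : Measurable v)
    (hur : Integrable (fun x => ‖u x‖ ^ (r + 1)) m)
    (hvr : Integrable (fun x => ‖v x‖ ^ (r + 1)) m) :
    (2 : ℝ) ^ (1 - r) * ∫ x, ‖u x - v x‖ ^ (r + 1) ∂m ≤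
      ∫ x, ⟪(‖u x‖ ^ (r - 1)) • u x - (‖v x‖ ^ (r - 1)) • v x, u x - v x⟫ ∂m := by
  have hint : Integrable
      (fun x => ⟪(‖u x‖ ^ (r - 1)) • u x - (‖v x‖ ^ (r - 1)) • v x, u x - v x⟫) m :=
    ((hur.add hvr).const_mul 2).mono' (by fun_prop)
      (ae_of_all _ fun x => norm_inner_rpow_smul_sub_le hr (u x) (v x))
  rw [← integral_const_mul]
  exact integral_mono_of_nonneg (ae_of_all _ fun x => by positivity) hint
    (ae_of_all _ fun x => two_rpow_one_sub_mul_norm_sub_rpow_le_inner hr (u x) (v x))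

/-- Strong monotonicity of the Forchheimer nonlinearity `C(u) = |u|^{r-1}u`:
`⟨C(u) − C(v), u − v⟩_{L²(m)} ≥ 2^{1−r} ‖u − v‖_{L^{r+1}(m)}^{r+1}`. -/
theorem forchheimer_integral_strong_monotone {X : Type*} [MeasurableSpace X] (m : Measure X)
    (n : ℕ) (hn : 1 ≤ n) (r : ℝ) (hr : 1 ≤ r)
    (u v : X → EuclideanSpace ℝ (Fin n)) (hu : Measurable u) (hv : Measurable v)
    (hur : Integrable (fun x => ‖u x‖ ^ (r + 1)) m)
    (hvr : Integrable (fun x => ‖v x‖ ^ (r + 1)) m) :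
    (2 : ℝ) ^ (1 - r) * ∫ x, ‖u x - v x‖ ^ (r + 1) ∂m ≤
      ∫ x, ⟪(‖u x‖ ^ (r - 1)) • u x - (‖v x‖ ^ (r - 1)) • v x, u x - v x⟫ ∂m :=
  forchheimer_integral_strong_monotone_general m n r hr u v hu hv hur hvr
end

section
/- Let f : ℝ² → ℝ be a continuously differentiable function with compact support. Then ∫_{ℝ²} f(x)⁴ dx ≤ 2 (∫_{ℝ²} f(x)² dx) (∫_{ℝ²} |∇f(x)|² dx), where |∇f(x)|² = (∂f/∂x₁)(x)² + (∂f/∂x₂)(x)² and integrals are with respect to Lebesgue measure. Equivalently, ‖f‖_{L⁴}² ≤ √2 ‖f‖_{L²} ‖∇f‖_{L²}. -/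
open MeasureTheory

/-!
Put `g = f²`. Integrating `∂₁g` along the horizontal line through `(a, b)` bounds `|g (a, b)|` by a
function of `b` alone, and integrating `∂₂g` along the vertical line bounds it by a function of `a`
alone; multiplying the two bounds separates the variables, so `∫ g² ≤ ‖∂₁g‖₁ ‖∂₂g‖₁`. Since
`|∂ᵢ(f²)| = 2 |f| |∂ᵢf|`, Cauchy–Schwarz and `4 I₁ I₂ ≤ 2 (I₁² + I₂²)` give the inequality.
-/

section
variable {E F : Type*} [NormedAddCommGroup E] [NormedSpace ℝ E]
  [NormedAddCommGroup F] [NormedSpace ℝ F] [CompleteSpace F]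

theorem HasCompactSupport.norm_le_integral_norm_deriv {f : ℝ → F} (hf : ContDiff ℝ 1 f)
    (hfs : HasCompactSupport f) (a : ℝ) : ‖f a‖ ≤ ∫ t, ‖deriv f t‖ := by
  have hint : Integrable (fun t ↦ ‖deriv f t‖) :=
    (hf.continuous_deriv le_rfl).norm.integrable_of_hasCompactSupport hfs.deriv.norm
  calc ‖f a‖ = ‖∫ t in Set.Iic a, deriv f t‖ := by rw [hfs.integral_Iic_deriv_eq hf a]
    _ ≤ ∫ t in Set.Iic a, ‖deriv f t‖ := norm_integral_le_integral_norm _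
    _ ≤ ∫ t, ‖deriv f t‖ := setIntegral_le_integral hint (.of_forall fun _ ↦ norm_nonneg _)

theorem HasCompactSupport.norm_le_integral_norm_fderiv_line {g : E → F} (hg : ContDiff ℝ 1 g)
    (hgs : HasCompactSupport g) (x : E) {v : E} (hv : v ≠ 0) (s : ℝ) :
    ‖g (x + s • v)‖ ≤ ∫ t : ℝ, ‖fderiv ℝ g (x + t • v) v‖ := by
  have hline : Topology.IsClosedEmbedding (fun t : ℝ ↦ x + t • v) :=
    (Homeomorph.addLeft x).isClosedEmbedding.comp (isClosedEmbedding_smul_left hv)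
  have hderiv (t : ℝ) : deriv (fun t : ℝ ↦ g (x + t • v)) t = fderiv ℝ g (x + t • v) v := by
    have hline' : HasDerivAt (fun t : ℝ ↦ x + t • v) v t := by
      simpa using ((hasDerivAt_id t).smul_const v).const_add x
    exact ((hg.differentiable one_ne_zero _).hasFDerivAt.comp_hasDerivAt t hline').deriv
  have hcd : ContDiff ℝ 1 (fun t : ℝ ↦ g (x + t • v)) :=
    hg.comp (contDiff_const.add (contDiff_id.smul contDiff_const))
  simpa only [hderiv] using norm_le_integral_norm_deriv hcd (hgs.comp_isClosedEmbedding hline) s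

end

theorem ContDiff.memLp_fderiv_apply {E F : Type*} [NormedAddCommGroup E] [NormedSpace ℝ E]
    [NormedAddCommGroup F] [NormedSpace ℝ F] [MeasurableSpace E] [OpensMeasurableSpace E]
    {μ : Measure E} [IsFiniteMeasureOnCompacts μ] {g : E → F} (hg : ContDiff ℝ 1 g)
    (hgs : HasCompactSupport g) (v : E) (p : ENNReal) : MemLp (fun x ↦ fderiv ℝ g x v) p μ :=
  ((hg.continuous_fderiv one_ne_zero).clm_apply continuous_const).memLp_of_hasCompactSupport
    (hgs.fderiv_apply ℝ v)

theorem integral_sq_le_integral_mul_integral {α β : Type*} [MeasurableSpace α]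
    [MeasurableSpace β] {μ : Measure α} {ν : Measure β} [SFinite μ] [SFinite ν]
    {g : α × β → ℝ} {F : α → ℝ} {G : β → ℝ} (hF : Integrable F μ) (hG : Integrable G ν)
    (hgF : ∀ p, |g p| ≤ F p.1) (hgG : ∀ p, |g p| ≤ G p.2) :
    ∫ p, g p ^ 2 ∂μ.prod ν ≤ (∫ a, F a ∂μ) * ∫ b, G b ∂ν := by
  rw [← integral_prod_mul]
  refine integral_mono_of_nonneg (.of_forall fun p ↦ sq_nonneg _) (hF.mul_prod hG)
    (.of_forall fun p ↦ ?_)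
  calc g p ^ 2 = |g p| * |g p| := by rw [← sq_abs, sq]
    _ ≤ F p.1 * G p.2 := mul_le_mul (hgF p) (hgG p) (abs_nonneg _) ((abs_nonneg _).trans (hgF p))

theorem integral_abs_mul_sq_le {α : Type*} [MeasurableSpace α] {μ : Measure α} {u v : α → ℝ}
    (hu : MemLp u 2 μ) (hv : MemLp v 2 μ) :
    (∫ a, |u a| * |v a| ∂μ) ^ 2 ≤ (∫ a, u a ^ 2 ∂μ) * ∫ a, v a ^ 2 ∂μ := by
  have holder := integral_mul_le_Lp_mul_Lq_of_nonneg Real.HolderConjugate.two_two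
    (.of_forall fun a ↦ abs_nonneg (u a)) (.of_forall fun a ↦ abs_nonneg (v a))
    (by rw [ENNReal.ofReal_ofNat]; exact hu.abs) (by rw [ENNReal.ofReal_ofNat]; exact hv.abs)
  simp only [Real.rpow_two, sq_abs, ← Real.sqrt_eq_rpow] at holder
  calc (∫ a, |u a| * |v a| ∂μ) ^ 2
      ≤ (√(∫ a, u a ^ 2 ∂μ) * √(∫ a, v a ^ 2 ∂μ)) ^ 2 :=
        pow_le_pow_left₀ (integral_nonneg fun a ↦ by positivity) holder 2
    _ = (∫ a, u a ^ 2 ∂μ) * ∫ a, v a ^ 2 ∂μ := by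
        rw [mul_pow, Real.sq_sqrt (integral_nonneg fun a ↦ sq_nonneg _),
          Real.sq_sqrt (integral_nonneg fun a ↦ sq_nonneg _)]

theorem integral_sq_le_integral_abs_fderiv_mul {g : ℝ × ℝ → ℝ} (hg : ContDiff ℝ 1 g)
    (hgs : HasCompactSupport g) :
    ∫ p, g p ^ 2 ≤ (∫ p, |fderiv ℝ g p (1, 0)|) * ∫ p, |fderiv ℝ g p (0, 1)| := by
  have hint (v : ℝ × ℝ) : Integrable (fun p ↦ |fderiv ℝ g p v|) :=
    (memLp_one_iff_integrable.1 (hg.memLp_fderiv_apply hgs v 1)).abs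
  have hfst (p : ℝ × ℝ) : |g p| ≤ ∫ t, |fderiv ℝ g (t, p.2) (1, 0)| := by
    simpa using hgs.norm_le_integral_norm_fderiv_line hg (0, p.2) (v := (1, 0)) (by simp) p.1
  have hsnd (p : ℝ × ℝ) : |g p| ≤ ∫ t, |fderiv ℝ g (p.1, t) (0, 1)| := by
    simpa using hgs.norm_le_integral_norm_fderiv_line hg (p.1, 0) (v := (0, 1)) (by simp) p.2
  calc ∫ p, g p ^ 2
      ≤ (∫ a, ∫ t, |fderiv ℝ g (a, t) (0, 1)|) * ∫ b, ∫ t, |fderiv ℝ g (t, b) (1, 0)| :=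
        integral_sq_le_integral_mul_integral (hint _).integral_prod_left
          (hint _).integral_prod_right hsnd hfst
    _ = (∫ p, |fderiv ℝ g p (1, 0)|) * ∫ p, |fderiv ℝ g p (0, 1)| := by
        rw [← integral_prod _ (hint _), ← integral_prod_symm _ (hint _), mul_comm,
          Measure.volume_eq_prod]

theorem ladyzhenskaya_real_prod {h : ℝ × ℝ → ℝ} (hh : ContDiff ℝ 1 h)
    (hhs : HasCompactSupport h) :
    ∫ p, h p ^ 4 ≤
      2 * (∫ p, h p ^ 2) * ∫ p, (fderiv ℝ h p (1, 0) ^ 2 + fderiv ℝ h p (0, 1) ^ 2) := by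
  have hsq_deriv (p v : ℝ × ℝ) :
      |fderiv ℝ (fun p ↦ h p ^ 2) p v| = 2 * (|h p| * |fderiv ℝ h p v|) := by
    rw [fderiv_fun_pow 2 (hh.differentiable one_ne_zero p)]
    simp [abs_mul, mul_assoc]
  have hgns := integral_sq_le_integral_abs_fderiv_mul (hh.pow 2)
    (hhs.comp_left (g := (· ^ 2)) (zero_pow two_ne_zero))
  simp only [hsq_deriv, ← pow_mul, integral_const_mul] at hgns
  have hcs (v : ℝ × ℝ) := integral_abs_mul_sq_le
    (hh.continuous.memLp_of_hasCompactSupport (μ := volume) hhs) (hh.memLp_fderiv_apply hhs v 2)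
  rw [integral_add ((hh.memLp_fderiv_apply hhs _ 2).integrable_sq)
    ((hh.memLp_fderiv_apply hhs _ 2).integrable_sq)]
  nlinarith [hcs (1, 0), hcs (0, 1),
    sq_nonneg ((∫ p, |h p| * |fderiv ℝ h p (1, 0)|) - ∫ p, |h p| * |fderiv ℝ h p (0, 1)|)]

/-- The two-dimensional Ladyzhenskaya inequality:
`∫ f⁴ ≤ 2 (∫ f²) (∫ |∇f|²)` for compactly supported `C¹` functions `f : ℝ² → ℝ`. -/
theorem ladyzhenskaya_2d (f : EuclideanSpace ℝ (Fin 2) → ℝ)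
    (hf : ContDiff ℝ 1 f) (hfs : HasCompactSupport f) :
    ∫ x, f x ^ 4 ≤
      2 * (∫ x, f x ^ 2) * ∫ x, ∑ i, (fderiv ℝ f x (EuclideanSpace.single i 1)) ^ 2 := by
  let e : EuclideanSpace ℝ (Fin 2) ≃L[ℝ] ℝ × ℝ :=
    (EuclideanSpace.equiv (Fin 2) ℝ).trans (ContinuousLinearEquiv.finTwoArrow ℝ ℝ)
  have he : MeasurePreserving e :=
    (volume_preserving_finTwoArrow ℝ).comp (PiLp.volume_preserving_ofLp (Fin 2))
  have hint (F : ℝ × ℝ → ℝ) : ∫ x, F (e x) = ∫ p, F p :=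
    he.integral_comp e.toHomeomorph.measurableEmbedding F
  have hfderiv (x : EuclideanSpace ℝ (Fin 2)) (v : ℝ × ℝ) :
      fderiv ℝ (f ∘ e.symm) (e x) v = fderiv ℝ f x (e.symm v) := by
    simp [e.symm.comp_right_fderiv]
  have hsingle : e.symm (1, 0) = EuclideanSpace.single 0 1 ∧
      e.symm (0, 1) = EuclideanSpace.single 1 1 := by
    constructor <;> ext i <;> fin_cases i <;> simp [e]
  have hprod := ladyzhenskaya_real_prod (hf.comp e.symm.contDiff)
    (hfs.comp_homeomorph e.symm.toHomeomorph)
  rw [← hint, ← hint, ← hint] at hprod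
  simpa [hfderiv, hsingle, Fin.sum_univ_two] using hprod
end

section
/- Let v, w : ℝ² → ℝ² be continuously differentiable vector fields with compact support. Then |∫_{ℝ²} Σ_{i,j=1}^{2} w_i(x)(∂v_j/∂x_i)(x) w_j(x) dx| ≤ √2 (∫_{ℝ²} |∇v|² dx)^{1/2} (∫_{ℝ²} |w|² dx)^{1/2} (∫_{ℝ²} |∇w|² dx)^{1/2}, where |∇v|² = Σ_{i,j} ((∂v_j/∂x_i))² and |w| is the Euclidean norm; integrals are with respect to Lebesgue measure. -/
/-!
Pointwise Cauchy–Schwarz bounds the integrand by `|∇v| |w|²`, so Cauchy–Schwarz in `L²` gives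
`|b(w, v, w)| ≤ ‖∇v‖₂ ‖w‖₄²`, and Ladyzhenskaya's inequality `‖w‖₄⁴ ≤ 2 ‖w‖₂² ‖∇w‖₂²` finishes.
The latter comes from the planar inequality `∫ f² ≤ (∫ |∂₁f|) (∫ |∂₂f|)`: `|f(x, y)|` is bounded by
the integral of `|∂₁f|` along the horizontal line through `(x, y)` and by that of `|∂₂f|` along the
vertical one, and Tonelli splits the integral of the product. For `f = |w|²` one has
`|∂ᵢf| ≤ 2 |w| |∂ᵢw|`, and Cauchy–Schwarz with `2 √(ab) ≤ a + b` yields the constant `2`.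
-/

open MeasureTheory

section GagliardoNirenberg

variable {F : Type*} [NormedAddCommGroup F] [NormedSpace ℝ F]

theorem enorm_le_lintegral_fderiv_fst {f : ℝ × ℝ → F} (hf : ContDiff ℝ 1 f)
    (hfs : HasCompactSupport f) (x y : ℝ) :
    ‖f (x, y)‖ₑ ≤ ∫⁻ t, ‖fderiv ℝ f (t, y) (1, 0)‖ₑ := by
  have hline : Topology.IsClosedEmbedding fun t : ℝ => (t, y) :=
    Function.LeftInverse.isClosedEmbedding (f := Prod.fst) (fun _ => rfl) continuous_fst
      (continuous_id.prodMk continuous_const)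
  have hderiv (t : ℝ) : deriv (fun t => f (t, y)) t = fderiv ℝ f (t, y) (1, 0) :=
    ((hf.differentiable one_ne_zero (t, y)).hasFDerivAt.comp_hasDerivAt t
      ((hasDerivAt_id t).prodMk (hasDerivAt_const t y))).deriv
  calc ‖f (x, y)‖ₑ ≤ ∫⁻ t in Set.Iic x, ‖deriv (fun t => f (t, y)) t‖ₑ :=
        HasCompactSupport.enorm_le_lintegral_Ici_deriv
          (hf.comp (contDiff_id.prodMk contDiff_const)) (hfs.comp_isClosedEmbedding hline) x
    _ ≤ ∫⁻ t, ‖deriv (fun t => f (t, y)) t‖ₑ := lintegral_mono' Measure.restrict_le_self le_rfl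
    _ = ∫⁻ t, ‖fderiv ℝ f (t, y) (1, 0)‖ₑ := by simp_rw [hderiv]

theorem enorm_le_lintegral_fderiv_snd {f : ℝ × ℝ → F} (hf : ContDiff ℝ 1 f)
    (hfs : HasCompactSupport f) (x y : ℝ) :
    ‖f (x, y)‖ₑ ≤ ∫⁻ t, ‖fderiv ℝ f (x, t) (0, 1)‖ₑ := by
  let σ := ContinuousLinearEquiv.prodComm ℝ ℝ ℝ
  simpa [σ.comp_right_fderiv, σ] using
    enorm_le_lintegral_fderiv_fst (hf.comp σ.contDiff) (hfs.comp_homeomorph σ.toHomeomorph) y x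

theorem lintegral_enorm_sq_le_mul_lintegral_fderiv {f : ℝ × ℝ → F} (hf : ContDiff ℝ 1 f)
    (hfs : HasCompactSupport f) :
    ∫⁻ p, ‖f p‖ₑ ^ 2 ≤
      (∫⁻ p, ‖fderiv ℝ f p (1, 0)‖ₑ) * ∫⁻ p, ‖fderiv ℝ f p (0, 1)‖ₑ := by
  have hDf : Continuous (fderiv ℝ f) := hf.continuous_fderiv one_ne_zero
  have h₁ : Measurable fun p => ‖fderiv ℝ f p (1, 0)‖ₑ :=
    (continuous_enorm.comp (hDf.clm_apply continuous_const)).measurable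
  have h₂ : Measurable fun p => ‖fderiv ℝ f p (0, 1)‖ₑ :=
    (continuous_enorm.comp (hDf.clm_apply continuous_const)).measurable
  calc ∫⁻ p, ‖f p‖ₑ ^ 2
      ≤ ∫⁻ p : ℝ × ℝ, (∫⁻ t, ‖fderiv ℝ f (p.1, t) (0, 1)‖ₑ) *
          ∫⁻ t, ‖fderiv ℝ f (t, p.2) (1, 0)‖ₑ := lintegral_mono fun p => by
        rw [sq]
        exact mul_le_mul' (enorm_le_lintegral_fderiv_snd hf hfs p.1 p.2)
          (enorm_le_lintegral_fderiv_fst hf hfs p.1 p.2)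
    _ = (∫⁻ x, ∫⁻ t, ‖fderiv ℝ f (x, t) (0, 1)‖ₑ) * ∫⁻ y, ∫⁻ t, ‖fderiv ℝ f (t, y) (1, 0)‖ₑ := by
        rw [Measure.volume_eq_prod, lintegral_prod_mul
          (h₂.lintegral_prod_right').aemeasurable (h₁.lintegral_prod_left').aemeasurable]
    _ = _ := by
        rw [Measure.volume_eq_prod, lintegral_prod _ h₂.aemeasurable,
          lintegral_prod_symm _ h₁.aemeasurable, mul_comm]

noncomputable def prodEquivEuclideanFinTwo : (ℝ × ℝ) ≃L[ℝ] EuclideanSpace ℝ (Fin 2) :=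
  (ContinuousLinearEquiv.finTwoArrow ℝ ℝ).symm.trans (EuclideanSpace.equiv (Fin 2) ℝ).symm

theorem measurePreserving_prodEquivEuclideanFinTwo :
    MeasurePreserving prodEquivEuclideanFinTwo :=
  (EuclideanSpace.volume_preserving_symm_measurableEquiv_toLp (Fin 2)).symm.comp
    (volume_preserving_finTwoArrow ℝ).symm

theorem prodEquivEuclideanFinTwo_one_zero :
    prodEquivEuclideanFinTwo (1, 0) = EuclideanSpace.single 0 1 := by
  ext i; fin_cases i <;> rfl

theorem prodEquivEuclideanFinTwo_zero_one :
    prodEquivEuclideanFinTwo (0, 1) = EuclideanSpace.single 1 1 := by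
  ext i; fin_cases i <;> rfl

theorem lintegral_enorm_sq_le_mul_lintegral_fderiv_euclidean
    {f : EuclideanSpace ℝ (Fin 2) → F} (hf : ContDiff ℝ 1 f) (hfs : HasCompactSupport f) :
    ∫⁻ x, ‖f x‖ₑ ^ 2 ≤ (∫⁻ x, ‖fderiv ℝ f x (EuclideanSpace.single 0 1)‖ₑ) *
      ∫⁻ x, ‖fderiv ℝ f x (EuclideanSpace.single 1 1)‖ₑ := by
  let ψ := prodEquivEuclideanFinTwo
  have hψ : MeasurePreserving ψ := measurePreserving_prodEquivEuclideanFinTwo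
  have hDf : Continuous (fderiv ℝ f) := hf.continuous_fderiv one_ne_zero
  have hm : Measurable fun x => ‖f x‖ₑ ^ 2 :=
    (continuous_enorm.comp hf.continuous).measurable.pow_const 2
  have hDm (u : EuclideanSpace ℝ (Fin 2)) : Measurable fun x => ‖fderiv ℝ f x u‖ₑ :=
    (continuous_enorm.comp (hDf.clm_apply continuous_const)).measurable
  rw [← hψ.lintegral_comp hm, ← hψ.lintegral_comp (hDm _), ← hψ.lintegral_comp (hDm _),
    ← prodEquivEuclideanFinTwo_one_zero, ← prodEquivEuclideanFinTwo_zero_one]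
  simpa only [ψ.comp_right_fderiv, ContinuousLinearMap.comp_apply, ContinuousLinearEquiv.coe_coe,
    Function.comp_apply] using
    lintegral_enorm_sq_le_mul_lintegral_fderiv (hf.comp ψ.contDiff)
      (hfs.comp_homeomorph ψ.toHomeomorph)

theorem integral_norm_sq_le_mul_integral_norm_fderiv_euclidean
    {f : EuclideanSpace ℝ (Fin 2) → F} (hf : ContDiff ℝ 1 f) (hfs : HasCompactSupport f) :
    ∫ x, ‖f x‖ ^ 2 ≤ (∫ x, ‖fderiv ℝ f x (EuclideanSpace.single 0 1)‖) *
      ∫ x, ‖fderiv ℝ f x (EuclideanSpace.single 1 1)‖ := by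
  have hDf : Continuous (fderiv ℝ f) := hf.continuous_fderiv one_ne_zero
  have hDfi (u : EuclideanSpace ℝ (Fin 2)) : Integrable fun x => fderiv ℝ f x u :=
    (hDf.clm_apply continuous_const).integrable_of_hasCompactSupport (hfs.fderiv_apply ℝ u)
  have hsq : Integrable fun x => ‖f x‖ ^ 2 :=
    (hf.continuous.norm.memLp_of_hasCompactSupport hfs.norm).integrable_sq
  have key := lintegral_enorm_sq_le_mul_lintegral_fderiv_euclidean hf hfs
  rw [← ofReal_integral_norm_eq_lintegral_enorm (hDfi _),
    ← ofReal_integral_norm_eq_lintegral_enorm (hDfi _), ← ENNReal.ofReal_mul (by positivity)] at key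
  rw [← ENNReal.ofReal_le_ofReal_iff (by positivity),
    ofReal_integral_eq_lintegral_ofReal hsq (ae_of_all _ fun x => by positivity)]
  simpa only [ENNReal.ofReal_pow (norm_nonneg _), ofReal_norm] using key

end GagliardoNirenberg

theorem integral_mul_le_sqrt_mul_sqrt {α : Type*} [MeasurableSpace α] {μ : Measure α}
    {f g : α → ℝ} (hf : 0 ≤ᵐ[μ] f) (hg : 0 ≤ᵐ[μ] g) (hf₂ : MemLp f 2 μ) (hg₂ : MemLp g 2 μ) :
    ∫ a, f a * g a ∂μ ≤ √(∫ a, f a ^ 2 ∂μ) * √(∫ a, g a ^ 2 ∂μ) := by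
  simpa only [Real.rpow_two, ← Real.sqrt_eq_rpow] using
    integral_mul_le_Lp_mul_Lq_of_nonneg Real.HolderConjugate.two_two hf hg
      (by simpa using hf₂) (by simpa using hg₂)

section Ladyzhenskaya

variable {E F : Type*} [NormedAddCommGroup E] [NormedSpace ℝ E]
  [NormedAddCommGroup F] [InnerProductSpace ℝ F]

theorem norm_fderiv_norm_sq_apply_le {w : E → F} {x : E} (hw : DifferentiableAt ℝ w x) (u : E) :
    ‖fderiv ℝ (fun x => ‖w x‖ ^ 2) x u‖ ≤ 2 * ‖w x‖ * ‖fderiv ℝ w x u‖ := by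
  rw [hw.hasFDerivAt.norm_sq.fderiv]
  simpa [abs_mul, mul_assoc] using abs_real_inner_le_norm (w x) (fderiv ℝ w x u)

theorem integral_norm_fderiv_norm_sq_apply_le [MeasurableSpace E] [OpensMeasurableSpace E]
    {μ : Measure E} [IsFiniteMeasureOnCompacts μ] {w : E → F} (hw : ContDiff ℝ 1 w)
    (hws : HasCompactSupport w) (u : E) :
    ∫ x, ‖fderiv ℝ (fun x => ‖w x‖ ^ 2) x u‖ ∂μ ≤
      2 * (√(∫ x, ‖w x‖ ^ 2 ∂μ) * √(∫ x, ‖fderiv ℝ w x u‖ ^ 2 ∂μ)) := by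
  have hDw : Continuous fun x => fderiv ℝ w x u :=
    (hw.continuous_fderiv one_ne_zero).clm_apply continuous_const
  have hw₂ : MemLp (fun x => ‖w x‖) 2 μ := hw.continuous.norm.memLp_of_hasCompactSupport hws.norm
  have hDw₂ : MemLp (fun x => ‖fderiv ℝ w x u‖) 2 μ :=
    hDw.norm.memLp_of_hasCompactSupport (hws.fderiv_apply ℝ u).norm
  calc ∫ x, ‖fderiv ℝ (fun x => ‖w x‖ ^ 2) x u‖ ∂μ
      ≤ ∫ x, 2 * (‖w x‖ * ‖fderiv ℝ w x u‖) ∂μ :=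
        integral_mono_of_nonneg (ae_of_all _ fun _ => norm_nonneg _)
          ((hw₂.integrable_mul hDw₂).const_mul 2) (ae_of_all _ fun x => by
            simpa only [mul_assoc] using
              norm_fderiv_norm_sq_apply_le (hw.differentiable one_ne_zero x) u)
    _ = 2 * ∫ x, ‖w x‖ * ‖fderiv ℝ w x u‖ ∂μ := integral_const_mul 2 _
    _ ≤ 2 * (√(∫ x, ‖w x‖ ^ 2 ∂μ) * √(∫ x, ‖fderiv ℝ w x u‖ ^ 2 ∂μ)) := by
        gcongr
        exact integral_mul_le_sqrt_mul_sqrt (ae_of_all _ fun _ => norm_nonneg _)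
          (ae_of_all _ fun _ => norm_nonneg _) hw₂ hDw₂

theorem integral_norm_pow_four_le {w : EuclideanSpace ℝ (Fin 2) → F} (hw : ContDiff ℝ 1 w)
    (hws : HasCompactSupport w) :
    ∫ x, ‖w x‖ ^ 4 ≤
      2 * (∫ x, ‖w x‖ ^ 2) * ∫ x, ∑ i, ‖fderiv ℝ w x (EuclideanSpace.single i 1)‖ ^ 2 := by
  set L := ∫ x, ‖w x‖ ^ 2
  set q : Fin 2 → ℝ := fun i => ∫ x, ‖fderiv ℝ w x (EuclideanSpace.single i 1)‖ ^ 2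
  have hDw₂ (i : Fin 2) : Integrable fun x => ‖fderiv ℝ w x (EuclideanSpace.single i 1)‖ ^ 2 :=
    (((hw.continuous_fderiv one_ne_zero).clm_apply continuous_const).norm.memLp_of_hasCompactSupport
      (hws.fderiv_apply ℝ _).norm).integrable_sq
  have hq : q 0 + q 1 = ∫ x, ∑ i, ‖fderiv ℝ w x (EuclideanSpace.single i 1)‖ ^ 2 := by
    simp only [q, Fin.sum_univ_two, integral_add (hDw₂ 0) (hDw₂ 1)]
  have hamgm : 2 * √(q 0) * √(q 1) ≤ q 0 + q 1 := by
    have hq₀ : 0 ≤ q 0 := integral_nonneg fun _ => sq_nonneg _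
    have hq₁ : 0 ≤ q 1 := integral_nonneg fun _ => sq_nonneg _
    simpa only [Real.sq_sqrt hq₀, Real.sq_sqrt hq₁] using two_mul_le_add_sq √(q 0) √(q 1)
  calc ∫ x, ‖w x‖ ^ 4 = ∫ x, ‖‖w x‖ ^ 2‖ ^ 2 := by simp only [norm_pow, norm_norm, ← pow_mul]
    _ ≤ (∫ x, ‖fderiv ℝ (fun x => ‖w x‖ ^ 2) x (EuclideanSpace.single 0 1)‖) *
          ∫ x, ‖fderiv ℝ (fun x => ‖w x‖ ^ 2) x (EuclideanSpace.single 1 1)‖ :=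
        integral_norm_sq_le_mul_integral_norm_fderiv_euclidean (hw.norm_sq ℝ)
          (hws.comp_left (g := fun y => ‖y‖ ^ 2) (by simp))
    _ ≤ (2 * (√L * √(q 0))) * (2 * (√L * √(q 1))) :=
        mul_le_mul (integral_norm_fderiv_norm_sq_apply_le hw hws _)
          (integral_norm_fderiv_norm_sq_apply_le hw hws _)
          (integral_nonneg fun _ => norm_nonneg _) (by positivity)
    _ = 2 * (√L * √L) * (2 * √(q 0) * √(q 1)) := by ring
    _ ≤ 2 * L * (q 0 + q 1) := by
        rw [Real.mul_self_sqrt (integral_nonneg fun _ => sq_nonneg _)]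
        gcongr
    _ = _ := by rw [hq]

end Ladyzhenskaya

theorem abs_sum_sum_mul_mul_le {ι : Type*} [Fintype ι] (M : ι → ι → ℝ)
    (y : EuclideanSpace ℝ ι) :
    |∑ i, ∑ j, y i * M i j * y j| ≤ √(∑ i, ∑ j, M i j ^ 2) * ‖y‖ ^ 2 := by
  have hS : ∑ i, ∑ j, y i * M i j * y j = ∑ p : ι × ι, M p.1 p.2 * (y p.1 * y p.2) := by
    rw [Fintype.sum_prod_type]
    exact Finset.sum_congr rfl fun i _ => Finset.sum_congr rfl fun j _ => by ring
  have hy : ∑ p : ι × ι, (y p.1 * y p.2) ^ 2 = (‖y‖ ^ 2) ^ 2 := by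
    simp only [EuclideanSpace.real_norm_sq_eq, sq (∑ i, _), Finset.sum_mul_sum, mul_pow,
      Fintype.sum_prod_type]
  rw [hS, ← Real.sqrt_sq (by positivity : 0 ≤ ‖y‖ ^ 2), ← Real.sqrt_mul (by positivity),
    ← hy, ← Fintype.sum_prod_type']
  exact Real.abs_le_sqrt (Finset.sum_mul_sq_le_sq_mul_sq _ _ _)

theorem abs_integral_sum_sum_mul_mul_le {α ι : Type*} [MeasurableSpace α] {μ : Measure α}
    [Fintype ι] {M : α → ι → ι → ℝ} {y : α → EuclideanSpace ℝ ι}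
    (hM : MemLp (fun a => √(∑ i, ∑ j, M a i j ^ 2)) 2 μ) (hy : MemLp (fun a => ‖y a‖ ^ 2) 2 μ) :
    |∫ a, ∑ i, ∑ j, y a i * M a i j * y a j ∂μ| ≤
      √(∫ a, ∑ i, ∑ j, M a i j ^ 2 ∂μ) * √(∫ a, ‖y a‖ ^ 4 ∂μ) := by
  calc |∫ a, ∑ i, ∑ j, y a i * M a i j * y a j ∂μ|
      ≤ ∫ a, |∑ i, ∑ j, y a i * M a i j * y a j| ∂μ := abs_integral_le_integral_abs
    _ ≤ ∫ a, √(∑ i, ∑ j, M a i j ^ 2) * ‖y a‖ ^ 2 ∂μ :=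
        integral_mono_of_nonneg (ae_of_all _ fun _ => abs_nonneg _) (hM.integrable_mul hy)
          (ae_of_all _ fun a => abs_sum_sum_mul_mul_le (M a) (y a))
    _ ≤ √(∫ a, √(∑ i, ∑ j, M a i j ^ 2) ^ 2 ∂μ) * √(∫ a, (‖y a‖ ^ 2) ^ 2 ∂μ) :=
        integral_mul_le_sqrt_mul_sqrt (ae_of_all _ fun _ => Real.sqrt_nonneg _)
          (ae_of_all _ fun _ => by positivity) hM hy
    _ = √(∫ a, ∑ i, ∑ j, M a i j ^ 2 ∂μ) * √(∫ a, ‖y a‖ ^ 4 ∂μ) := by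
        simp only [Real.sq_sqrt (by positivity : (0 : ℝ) ≤ ∑ i, ∑ j, M _ i j ^ 2), ← pow_mul]

theorem memLp_sqrt_sum_sq_fderiv {ι κ : Type*} [Fintype ι] [DecidableEq ι] [Fintype κ]
    {v : EuclideanSpace ℝ ι → EuclideanSpace ℝ κ} (hv : ContDiff ℝ 1 v)
    (hvs : HasCompactSupport v) :
    MemLp (fun x => √(∑ i, ∑ j, (fderiv ℝ v x (EuclideanSpace.single i 1) j) ^ 2)) 2 := by
  have hDv : Continuous (fderiv ℝ v) := hv.continuous_fderiv one_ne_zero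
  refine Continuous.memLp_of_hasCompactSupport ?_ ((hvs.fderiv ℝ).comp_left
    (g := fun M : EuclideanSpace ℝ ι →L[ℝ] EuclideanSpace ℝ κ =>
      √(∑ i, ∑ j, (M (EuclideanSpace.single i 1) j) ^ 2)) (by simp))
  refine Real.continuous_sqrt.comp (continuous_finsetSum _ fun i _ =>
    continuous_finsetSum _ fun j _ => ?_)
  exact ((PiLp.continuous_apply 2 _ j).comp (hDv.clm_apply continuous_const)).pow 2

/-- Two-dimensional estimate of the convective trilinear form:
`|b(w, v, w)| ≤ √2 ‖∇v‖_{L²} ‖w‖_{L²} ‖∇w‖_{L²}`. -/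
theorem trilinear_form_estimate_2d
    (v w : EuclideanSpace ℝ (Fin 2) → EuclideanSpace ℝ (Fin 2))
    (hv : ContDiff ℝ 1 v) (hw : ContDiff ℝ 1 w)
    (hvs : HasCompactSupport v) (hws : HasCompactSupport w) :
    |∫ x, ∑ i, ∑ j, w x i * fderiv ℝ v x (EuclideanSpace.single i 1) j * w x j| ≤
      Real.sqrt 2 *
        (∫ x, ∑ i, ∑ j, (fderiv ℝ v x (EuclideanSpace.single i 1) j) ^ 2) ^ ((1 : ℝ) / 2) *
        (∫ x, ‖w x‖ ^ 2) ^ ((1 : ℝ) / 2) *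
        (∫ x, ∑ i, ∑ j, (fderiv ℝ w x (EuclideanSpace.single i 1) j) ^ 2) ^ ((1 : ℝ) / 2) := by
  have hws₂ : HasCompactSupport fun x => ‖w x‖ ^ 2 :=
    hws.comp_left (g := fun y : EuclideanSpace ℝ (Fin 2) => ‖y‖ ^ 2) (by simp)
  have hw₂ : MemLp (fun x => ‖w x‖ ^ 2) 2 :=
    (hw.continuous.norm.pow 2).memLp_of_hasCompactSupport hws₂
  have hw₄ : ∫ x, ‖w x‖ ^ 4 ≤ 2 * (∫ x, ‖w x‖ ^ 2) *
      ∫ x, ∑ i, ∑ j, (fderiv ℝ w x (EuclideanSpace.single i 1) j) ^ 2 := by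
    simpa only [EuclideanSpace.real_norm_sq_eq (fderiv ℝ w _ _)] using
      integral_norm_pow_four_le hw hws
  calc |∫ x, ∑ i, ∑ j, w x i * fderiv ℝ v x (EuclideanSpace.single i 1) j * w x j|
      ≤ √(∫ x, ∑ i, ∑ j, (fderiv ℝ v x (EuclideanSpace.single i 1) j) ^ 2) *
          √(∫ x, ‖w x‖ ^ 4) :=
        abs_integral_sum_sum_mul_mul_le (memLp_sqrt_sum_sq_fderiv hv hvs) hw₂
    _ ≤ √(∫ x, ∑ i, ∑ j, (fderiv ℝ v x (EuclideanSpace.single i 1) j) ^ 2) *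
          √(2 * (∫ x, ‖w x‖ ^ 2) *
            ∫ x, ∑ i, ∑ j, (fderiv ℝ w x (EuclideanSpace.single i 1) j) ^ 2) := by
        gcongr
    _ = _ := by
        rw [Real.sqrt_mul (by positivity), Real.sqrt_mul (by positivity)]
        simp only [Real.sqrt_eq_rpow]
        ring
end
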